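/- arXiv:1906.02718 — 5 statements merged into one kernel-verified Lean document; each statement's English description precedes it below -/
import Mathlib

section
/- If a system of random variables is simply consistently connected but not strongly consistently connected, then it has no identically connected coupling (i.e., it is contextual in the sense of the STC definition). -/
abbrev Sgn : Type := ({-1, 1} : Finset ℤ)

def one : Sgn := ⟨1, by decide⟩

structure FDist (X : Type) [Fintype X] where
  m : X → ℝ
  nonneg : ∀ x, 0 ≤ m x
  total : ∑ x, m x = 1

def push {X Y : Type} [Fintype X] [DecidableEq Y] (p : X → ℝ) (f : X → Y) : Y → ℝ :=
  fun y => ∑ x, if f x = y then p x else 0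

section Systems

variable {Q C : Type} [Fintype Q] [Fintype C] [DecidableEq Q] [DecidableEq C]

abbrev Glob (pre : Q → C → Bool) : Type := {qc : Q × C // pre qc.1 qc.2}

def restr (pre : Q → C → Bool) (c : C) (f : Glob pre → Sgn) : {q : Q // pre q c} → Sgn :=
  fun q => f ⟨(q.1, c), q.2⟩

variable (pre : Q → C → Bool) (R : (c : C) → FDist ({q : Q // pre q c} → Sgn))

def IsCoupling (T : FDist (Glob pre → Sgn)) : Prop :=
  ∀ c : C, push T.m (restr pre c) = (R c).m

def marg (c : C) (q : Q) (h : pre q c) : Sgn → ℝ :=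
  push (R c).m (fun f => f ⟨q, h⟩)

def SimplyCC : Prop :=
  ∀ (q : Q) (c c' : C) (h : pre q c) (h' : pre q c'), marg pre R c q h = marg pre R c' q h'

def StronglyCC : Prop :=
  ∀ c c' : C,
    push (R c).m (fun f (q : {q : Q // pre q c ∧ pre q c'}) => f ⟨q.1, q.2.1⟩)
    = push (R c').m (fun f (q : {q : Q // pre q c ∧ pre q c'}) => f ⟨q.1, q.2.2⟩)

def prAgree (T : FDist (Glob pre → Sgn)) (q : Q) (c c' : C) (h : pre q c) (h' : pre q c') : ℝ :=
  ∑ f, if f ⟨(q, c), h⟩ = f ⟨(q, c'), h'⟩ then T.m f else 0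

def IdConn (T : FDist (Glob pre → Sgn)) : Prop :=
  ∀ (q : Q) (c c' : C) (h : pre q c) (h' : pre q c'), prAgree pre T q c c' h h' = 1

def IsAlphaCoupling (s : (Glob pre → Sgn) → ℝ) (α : ℝ) : Prop :=
  (∀ f, 0 ≤ s f) ∧ (∑ f, s f = α) ∧
  ∀ (c : C) (g : {q : Q // pre q c} → Sgn), push s (restr pre c) g ≤ (R c).m g

def IdConnSub (s : (Glob pre → Sgn) → ℝ) : Prop :=
  ∀ (q : Q) (c c' : C) (h : pre q c) (h' : pre q c'),
    (∑ f, if f ⟨(q, c), h⟩ ≠ f ⟨(q, c'), h'⟩ then s f else 0) = 0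

end Systems


lemma push_push {X Y Z : Type} [Fintype X] [Fintype Y] [DecidableEq Y] [DecidableEq Z]
    (p : X → ℝ) (f : X → Y) (g : Y → Z) :
    push (push p f) g = push p (fun x => g (f x)) := by
  funext z
  unfold push
  have h : ∀ y : Y, (if g y = z then ∑ x, if f x = y then p x else 0 else 0)
      = ∑ x, if g y = z ∧ f x = y then p x else 0 := by
    intro y; split <;> simp_all
  simp_rw [h]
  rw [Finset.sum_comm]
  apply Finset.sum_congr rfl
  intro x _
  rw [Finset.sum_eq_single (f x)]
  · by_cases hgx : g (f x) = z <;> simp [hgx]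
  · intro y _ hy; simp [Ne.symm hy]
  · simp

/-- A simply consistently connected system that is not strongly consistently
connected has no identically connected coupling (it is contextual in the STC sense). -/
theorem stmt1 {Q C : Type} [Fintype Q] [Fintype C] [DecidableEq Q] [DecidableEq C]
    (pre : Q → C → Bool) (R : (c : C) → FDist ({q : Q // pre q c} → Sgn))
    (hsimple : SimplyCC pre R) (hnotstrong : ¬ StronglyCC pre R) :
    ¬ ∃ T : FDist (Glob pre → Sgn), IsCoupling pre R T ∧ IdConn pre T := by
  rintro ⟨T, hc, hid⟩
  apply hnotstrong
  intro c c'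
  have key : ∀ f, T.m f ≠ 0 → ∀ (q : Q) (h : pre q c) (h' : pre q c'),
      f ⟨(q, c), h⟩ = f ⟨(q, c'), h'⟩ := by
    intro f hf q h h'
    by_contra hne
    have h1 := hid q c c' h h'
    unfold prAgree at h1
    have hsplit : (∑ g, if g ⟨(q,c),h⟩ = g ⟨(q,c'),h'⟩ then T.m g else 0)
        + (∑ g, if ¬ (g ⟨(q,c),h⟩ = g ⟨(q,c'),h'⟩) then T.m g else 0) = 1 := by
      rw [← Finset.sum_add_distrib, ← T.total]
      apply Finset.sum_congr rfl
      intro g _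
      by_cases hg : g ⟨(q,c),h⟩ = g ⟨(q,c'),h'⟩ <;> simp [hg]
    have hzero : (∑ g, if ¬ (g ⟨(q,c),h⟩ = g ⟨(q,c'),h'⟩) then T.m g else 0) = 0 := by
      linarith
    have hterm := (Finset.sum_eq_zero_iff_of_nonneg (by
      intro g _
      split
      · exact T.nonneg g
      · exact le_rfl)).mp hzero f (Finset.mem_univ f)
    rw [if_pos hne] at hterm
    exact hf hterm
  have hmain : push T.m (fun f (q : {q : Q // pre q c ∧ pre q c'}) => f ⟨(q.1, c), q.2.1⟩)
      = push T.m (fun f (q : {q : Q // pre q c ∧ pre q c'}) => f ⟨(q.1, c'), q.2.2⟩) := by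
    funext g
    unfold push
    apply Finset.sum_congr rfl
    intro f _
    by_cases hf : T.m f = 0
    · split <;> split <;> simp [hf]
    · have heq : (fun (q : {q : Q // pre q c ∧ pre q c'}) => f ⟨(q.1, c), q.2.1⟩)
          = fun (q : {q : Q // pre q c ∧ pre q c'}) => f ⟨(q.1, c'), q.2.2⟩ := by
        funext q; exact key f hf q.1 q.2.1 q.2.2
      beta_reduce
      rw [heq]
  rw [← hc c, ← hc c', push_push, push_push]
  exact hmain
end

section
/- A simply consistently connected system of random variables has noncontextual fraction α_max = 1 if and only if it has an identically connected coupling (equivalently: an identically connected α-coupling of total mass 1 exists if and only if the system has an identically connected coupling in the exact-marginal sense). In particular, if α_max = 1 the system is noncontextual. -/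
lemma push_sum {X Y : Type} [Fintype X] [Fintype Y] [DecidableEq Y] (p : X → ℝ) (f : X → Y) :
    ∑ y, push p f y = ∑ x, p x := by
  unfold push
  rw [Finset.sum_comm]
  refine Finset.sum_congr rfl fun x _ => ?_
  simp

lemma split_sum {X : Type} [Fintype X] (P : X → Prop) [DecidablePred P] (s : X → ℝ) :
    (∑ x, if P x then s x else 0) + (∑ x, if ¬ P x then s x else 0) = ∑ x, s x := by
  rw [← Finset.sum_add_distrib]
  refine Finset.sum_congr rfl fun x _ => ?_
  by_cases h : P x <;> simp [h]


/-- A simply consistently connected system has noncontextual fraction α_max = 1 iff it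
has an identically connected coupling; equivalently, an identically connected α-coupling
of total mass 1 exists iff an identically connected coupling in the exact-marginal sense
exists. -/
theorem stmt4 {Q C : Type} [Fintype Q] [Fintype C] [DecidableEq Q] [DecidableEq C]
    (pre : Q → C → Bool) (R : (c : C) → FDist ({q : Q // pre q c} → Sgn))
    (hsimple : SimplyCC pre R) (αmax : ℝ)
    (hmax : IsGreatest {α : ℝ | ∃ s : (Glob pre → Sgn) → ℝ,
        IsAlphaCoupling pre R s α ∧ IdConnSub pre s} αmax) :
    (αmax = 1 ↔ ∃ T : FDist (Glob pre → Sgn), IsCoupling pre R T ∧ IdConn pre T) ∧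
    ((∃ s : (Glob pre → Sgn) → ℝ, IsAlphaCoupling pre R s 1 ∧ IdConnSub pre s)
      ↔ ∃ T : FDist (Glob pre → Sgn), IsCoupling pre R T ∧ IdConn pre T) := by
    classical
  -- key construction: from a mass-1 sub-coupling get a genuine coupling
  have key : (∃ s : (Glob pre → Sgn) → ℝ, IsAlphaCoupling pre R s 1 ∧ IdConnSub pre s)
      → ∃ T : FDist (Glob pre → Sgn), IsCoupling pre R T ∧ IdConn pre T := by
    rintro ⟨s, ⟨hnn, htot, hmaj⟩, hconn⟩
    refine ⟨⟨s, hnn, htot⟩, ?_, ?_⟩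
    · intro c
      have hsum : ∑ g, push s (restr pre c) g = ∑ g, (R c).m g := by
        rw [push_sum, htot, (R c).total]
      by_contra hne
      have : ∃ g, push s (restr pre c) g ≠ (R c).m g := by
        by_contra h
        push_neg at h
        exact hne (funext h)
      obtain ⟨g, hg⟩ := this
      have hlt : push s (restr pre c) g < (R c).m g := lt_of_le_of_ne (hmaj c g) hg
      have : ∑ g, push s (restr pre c) g < ∑ g, (R c).m g :=
        Finset.sum_lt_sum (fun i _ => hmaj c i) ⟨g, Finset.mem_univ g, hlt⟩
      exact absurd hsum (ne_of_lt this)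
    · intro q c c' h h'
      have := split_sum (fun f : Glob pre → Sgn => f ⟨(q, c), h⟩ = f ⟨(q, c'), h'⟩) s
      unfold prAgree
      have h0 := hconn q c c' h h'
      simp only [ne_eq] at h0
      rw [h0, add_zero, htot] at this
      exact this
  have back : (∃ T : FDist (Glob pre → Sgn), IsCoupling pre R T ∧ IdConn pre T)
      → ∃ s : (Glob pre → Sgn) → ℝ, IsAlphaCoupling pre R s 1 ∧ IdConnSub pre s := by
    rintro ⟨T, hT, hTc⟩
    refine ⟨T.m, ⟨T.nonneg, T.total, fun c g => le_of_eq (by rw [hT c])⟩, ?_⟩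
    intro q c c' h h'
    have := split_sum (fun f : Glob pre → Sgn => f ⟨(q, c), h⟩ = f ⟨(q, c'), h'⟩) T.m
    have h1 := hTc q c c' h h'
    unfold prAgree at h1
    rw [h1, T.total] at this
    simp only [ne_eq]
    linarith
  have second : (∃ s : (Glob pre → Sgn) → ℝ, IsAlphaCoupling pre R s 1 ∧ IdConnSub pre s)
      ↔ ∃ T : FDist (Glob pre → Sgn), IsCoupling pre R T ∧ IdConn pre T := ⟨key, back⟩
  refine ⟨⟨fun hα => key (hα ▸ hmax.1), fun hT => ?_⟩, second⟩
  have h1le : (1 : ℝ) ≤ αmax := hmax.2 (back hT)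
  obtain ⟨s, ⟨hnn, htot, hmaj⟩, hconn⟩ := hmax.1
  by_cases hC : Nonempty C
  · obtain ⟨c⟩ := hC
    have : αmax ≤ 1 := by
      calc αmax = ∑ g, push s (restr pre c) g := by rw [push_sum, htot]
        _ ≤ ∑ g, (R c).m g := Finset.sum_le_sum (fun g _ => hmaj c g)
        _ = 1 := (R c).total
    linarith
  · exfalso
    have hmem : (2 * αmax) ∈ {α : ℝ | ∃ s : (Glob pre → Sgn) → ℝ,
        IsAlphaCoupling pre R s α ∧ IdConnSub pre s} := by
      refine ⟨fun f => 2 * s f, ⟨fun f => mul_nonneg (by norm_num) (hnn f), ?_, fun c => absurd ⟨c⟩ hC⟩, ?_⟩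
      · rw [← Finset.mul_sum, htot]
      · intro q c c' h h'
        exact absurd ⟨c⟩ hC
    have := hmax.2 hmem
    linarith
end

section
/- For any finite family μ₁, …, μ_n of probability distributions on {−1, 1}, there exists one and only one multimaximal coupling: a probability distribution T on {−1, 1}^n whose i-th coordinate marginal is μ_i for every i, and such that for every pair of indices i, j the probability under T that the i-th and j-th coordinates are equal is maximal among all probability distributions on {−1, 1}^n with coordinate marginals μ₁, …, μ_n. -/
/-- A coupling of a family of distributions on {−1,1}: a distribution on the product
with the given coordinate marginals. -/
def IsCouplingFam {n : ℕ} (μ : Fin n → FDist Sgn) (T : FDist (Fin n → Sgn)) : Prop :=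
  ∀ i : Fin n, push T.m (fun f => f i) = (μ i).m

/-- Probability that coordinates i and j agree. -/
def prEq {n : ℕ} (T : FDist (Fin n → Sgn)) (i j : Fin n) : ℝ :=
  ∑ f, if f i = f j then T.m f else 0

/-- T is a multimaximal coupling: every pairwise agreement probability is maximal
among all couplings of the family. -/
def IsMultimax {n : ℕ} (μ : Fin n → FDist Sgn) (T : FDist (Fin n → Sgn)) : Prop :=
  ∀ i j : Fin n, ∀ T' : FDist (Fin n → Sgn), IsCouplingFam μ T' → prEq T' i j ≤ prEq T i j

open Finset MeasureTheory

def negOne : Sgn := ⟨-1, by decide⟩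

lemma eq_one_or_eq_negOne (g : Sgn) : g = one ∨ g = negOne := by
  revert g; decide

lemma one_ne_negOne : one ≠ negOne := by decide

lemma ne_one_iff_eq_negOne {g : Sgn} : g ≠ one ↔ g = negOne := by
  revert g; decide

namespace FDist

variable {X : Type} [Fintype X]

def prob (T : FDist X) (φ : X → Prop) [DecidablePred φ] : ℝ :=
  ∑ x, if φ x then T.m x else 0

variable {T : FDist X} {φ ψ : X → Prop} [DecidablePred φ] [DecidablePred ψ]

lemma prob_nonneg : 0 ≤ T.prob φ :=
  sum_nonneg fun x _ => by split_ifs <;> simp [T.nonneg x]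

lemma apply_le_prob {x : X} (hx : φ x) : T.m x ≤ T.prob φ := by
  calc T.m x = if φ x then T.m x else 0 := (if_pos hx).symm
    _ ≤ T.prob φ := single_le_sum (f := fun y => if φ y then T.m y else 0)
        (fun y _ => by split_ifs <;> simp [T.nonneg y]) (mem_univ x)

lemma prob_congr (h : ∀ x, T.m x ≠ 0 → (φ x ↔ ψ x)) : T.prob φ = T.prob ψ := by
  refine sum_congr rfl fun x _ => ?_
  by_cases hx : T.m x = 0
  · simp [hx]
  · simp only [h x hx]

lemma prob_eq_prob_and_add_prob_and_not :
    T.prob φ = T.prob (fun x => φ x ∧ ψ x) + T.prob (fun x => φ x ∧ ¬ ψ x) := by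
  rw [prob, prob, prob, ← sum_add_distrib]
  refine sum_congr rfl fun x _ => ?_
  by_cases hφ : φ x <;> by_cases hψ : ψ x <;> simp [hφ, hψ]

lemma prob_add_prob_not : T.prob φ + T.prob (fun x => ¬ φ x) = 1 := by
  rw [← T.total, prob, prob, ← sum_add_distrib]
  exact sum_congr rfl fun x _ => by by_cases h : φ x <;> simp [h]

lemma prob_false : T.prob (fun _ => False) = 0 := by simp [prob]

lemma prob_true : T.prob (fun _ => True) = 1 := by simpa [prob] using T.total

lemma prob_eq_apply [DecidableEq X] (x : X) : T.prob (· = x) = T.m x := by simp [prob]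

end FDist

lemma FDist.apply_negOne (ν : FDist Sgn) : ν.m negOne = 1 - ν.m one := by
  have h := ν.prob_add_prob_not (φ := (· = one))
  rw [FDist.prob_eq_apply, FDist.prob_congr (ψ := (· = negOne)) fun g _ => ne_one_iff_eq_negOne,
    FDist.prob_eq_apply] at h
  linarith

lemma FDist.apply_one_le_one (ν : FDist Sgn) : ν.m one ≤ 1 := by
  linarith [ν.apply_negOne, ν.nonneg negOne]

section Coupling

variable {n : ℕ} {μ : Fin n → FDist Sgn} {T : FDist (Fin n → Sgn)}

lemma IsCouplingFam.prob_eq_one (hT : IsCouplingFam μ T) (i : Fin n) :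
    T.prob (· i = one) = (μ i).m one :=
  congrFun (hT i) one

lemma isCouplingFam_of_prob_eq_one (h : ∀ i, T.prob (· i = one) = (μ i).m one) :
    IsCouplingFam μ T := by
  intro i
  funext y
  rcases eq_one_or_eq_negOne y with rfl | rfl
  · exact h i
  · have hne := T.prob_add_prob_not (φ := (· i = one))
    rw [T.prob_congr (ψ := (· i = negOne)) fun g _ => ne_one_iff_eq_negOne, h i] at hne
    change T.prob (· i = negOne) = _
    rw [FDist.apply_negOne]
    linarith

lemma prEq_comm (i j : Fin n) : prEq T i j = prEq T j i := by
  simp only [prEq, eq_comm]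

/-- Pointwise, `[x = y] = 1 + [x = 1] - [y = 1] - 2 [x = 1, y = -1]` for signs `x, y`. -/
lemma prEq_eq_prob (i j : Fin n) :
    prEq T i j = 1 + T.prob (· i = one) - T.prob (· j = one)
      - 2 * T.prob (fun g => g i = one ∧ g j = negOne) := by
  rw [← T.total, FDist.prob, FDist.prob, FDist.prob, prEq, mul_sum, ← sum_add_distrib,
    ← sum_sub_distrib, ← sum_sub_distrib]
  refine sum_congr rfl fun g _ => ?_
  rcases eq_one_or_eq_negOne (g i) with hi | hi <;>
    rcases eq_one_or_eq_negOne (g j) with hj | hj <;>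
    simp [hi, hj, one_ne_negOne, one_ne_negOne.symm, two_mul]

lemma IsCouplingFam.prEq_eq (hT : IsCouplingFam μ T) (i j : Fin n) :
    prEq T i j = 1 - ((μ j).m one - (μ i).m one)
      - 2 * T.prob (fun g => g i = one ∧ g j = negOne) := by
  rw [prEq_eq_prob, hT.prob_eq_one, hT.prob_eq_one]
  ring

end Coupling

def IsOrderedBy {ι : Type} (p : ι → ℝ) (f : ι → Sgn) : Prop :=
  ∀ i j, p i ≤ p j → f i = one → f j = one

def HasOrderedSupport {n : ℕ} (μ : Fin n → FDist Sgn) (T : FDist (Fin n → Sgn)) : Prop :=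
  ∀ f, T.m f ≠ 0 → IsOrderedBy (fun i => (μ i).m one) f

section Ordered

variable {n : ℕ} {μ : Fin n → FDist Sgn} {T T₀ T₁ T₂ : FDist (Fin n → Sgn)}

lemma prob_forall_eq_one_of_hasOrderedSupport (hT : IsCouplingFam μ T)
    (hs : HasOrderedSupport μ T) {S : Finset (Fin n)} {i₀ : Fin n} (hi₀ : i₀ ∈ S)
    (hmin : ∀ k ∈ S, (μ i₀).m one ≤ (μ k).m one) :
    T.prob (fun g => ∀ i ∈ S, g i = one) = (μ i₀).m one := by
  rw [← hT.prob_eq_one i₀]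
  exact T.prob_congr fun g hg =>
    ⟨fun h => h i₀ hi₀, fun h k hk => hs g hg i₀ k (hmin k hk) h⟩

lemma prob_exists_eq_one_of_hasOrderedSupport (hT : IsCouplingFam μ T)
    (hs : HasOrderedSupport μ T) {S : Finset (Fin n)} {j₀ : Fin n} (hj₀ : j₀ ∈ S)
    (hmax : ∀ k ∈ S, (μ k).m one ≤ (μ j₀).m one) :
    T.prob (fun g => ∃ j ∈ S, g j = one) = (μ j₀).m one := by
  rw [← hT.prob_eq_one j₀]
  exact T.prob_congr fun g hg =>
    ⟨fun ⟨k, hk, h⟩ => hs g hg k j₀ (hmax k hk) h, fun h => ⟨j₀, hj₀, h⟩⟩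

lemma prob_forall_eq_one_eq_of_hasOrderedSupport
    (hT₁ : IsCouplingFam μ T₁) (hs₁ : HasOrderedSupport μ T₁)
    (hT₂ : IsCouplingFam μ T₂) (hs₂ : HasOrderedSupport μ T₂) (S : Finset (Fin n)) :
    T₁.prob (fun g => ∀ i ∈ S, g i = one) = T₂.prob (fun g => ∀ i ∈ S, g i = one) := by
  rcases S.eq_empty_or_nonempty with rfl | hS
  · simp only [notMem_empty, false_imp_iff, imp_true_iff, FDist.prob_true]
  · obtain ⟨i₀, hi₀, hmin⟩ := S.exists_min_image (fun i => (μ i).m one) hS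
    rw [prob_forall_eq_one_of_hasOrderedSupport hT₁ hs₁ hi₀ hmin,
      prob_forall_eq_one_of_hasOrderedSupport hT₂ hs₂ hi₀ hmin]

lemma prob_exists_eq_one_eq_of_hasOrderedSupport
    (hT₁ : IsCouplingFam μ T₁) (hs₁ : HasOrderedSupport μ T₁)
    (hT₂ : IsCouplingFam μ T₂) (hs₂ : HasOrderedSupport μ T₂) (S : Finset (Fin n)) :
    T₁.prob (fun g => ∃ j ∈ S, g j = one) = T₂.prob (fun g => ∃ j ∈ S, g j = one) := by
  rcases S.eq_empty_or_nonempty with rfl | hS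
  · simp only [notMem_empty, false_and, exists_false, FDist.prob_false]
  · obtain ⟨j₀, hj₀, hmax⟩ := S.exists_max_image (fun i => (μ i).m one) hS
    rw [prob_exists_eq_one_of_hasOrderedSupport hT₁ hs₁ hj₀ hmax,
      prob_exists_eq_one_of_hasOrderedSupport hT₂ hs₂ hj₀ hmax]

lemma apply_eq_prob_sub_prob_of_isOrderedBy {p : Fin n → ℝ}
    (hs : ∀ f, T.m f ≠ 0 → IsOrderedBy p f) {f : Fin n → Sgn} (hf : IsOrderedBy p f) :
    T.m f = T.prob (fun g => ∀ i ∈ univ.filter (f · = one), g i = one)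
      - T.prob (fun g => ∃ j ∈ univ.filter (f · = negOne), g j = one) := by
  have h_gt : T.prob (fun g => (∀ i ∈ univ.filter (f · = one), g i = one) ∧
      ∃ j ∈ univ.filter (f · = negOne), g j = one) =
      T.prob (fun g => ∃ j ∈ univ.filter (f · = negOne), g j = one) := by
    refine T.prob_congr fun g hg => ⟨And.right, fun hgt => ⟨fun i hi => ?_, hgt⟩⟩
    obtain ⟨j, hj, hgj⟩ := hgt
    simp only [mem_filter, mem_univ, true_and] at hi hj
    have hji : p j ≤ p i :=
      le_of_not_ge fun hij => one_ne_negOne ((hf i j hij hi).symm.trans hj)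
    exact hs g hg j i hji hgj
  have h_eq : T.prob (fun g => (∀ i ∈ univ.filter (f · = one), g i = one) ∧
      ¬ ∃ j ∈ univ.filter (f · = negOne), g j = one) = T.m f := by
    rw [← T.prob_eq_apply f]
    refine T.prob_congr fun g _ => ?_
    simp only [mem_filter, mem_univ, true_and, not_exists, not_and, ne_one_iff_eq_negOne]
    refine ⟨fun ⟨hge, hle⟩ => funext fun k => ?_, fun hgf => ?_⟩
    · rcases eq_one_or_eq_negOne (f k) with hk | hk
      · rw [hk, hge k hk]
      · rw [hk, hle k hk]
    · subst hgf
      exact ⟨fun _ => id, fun _ => id⟩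
  rw [T.prob_eq_prob_and_add_prob_and_not
    (ψ := fun g => ∃ j ∈ univ.filter (f · = negOne), g j = one), h_gt, h_eq]
  ring

lemma eq_of_hasOrderedSupport
    (hT₁ : IsCouplingFam μ T₁) (hs₁ : HasOrderedSupport μ T₁)
    (hT₂ : IsCouplingFam μ T₂) (hs₂ : HasOrderedSupport μ T₂) : T₁ = T₂ := by
  suffices h : T₁.m = T₂.m by
    cases T₁; cases T₂; congr
  funext f
  by_cases hf : IsOrderedBy (fun i => (μ i).m one) f
  · rw [apply_eq_prob_sub_prob_of_isOrderedBy hs₁ hf,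
      apply_eq_prob_sub_prob_of_isOrderedBy hs₂ hf,
      prob_forall_eq_one_eq_of_hasOrderedSupport hT₁ hs₁ hT₂ hs₂,
      prob_exists_eq_one_eq_of_hasOrderedSupport hT₁ hs₁ hT₂ hs₂]
  · rw [not_imp_comm.1 (hs₁ f) hf, not_imp_comm.1 (hs₂ f) hf]

lemma prob_eq_one_and_eq_negOne_of_hasOrderedSupport (hs : HasOrderedSupport μ T)
    {i j : Fin n} (hij : (μ i).m one ≤ (μ j).m one) :
    T.prob (fun g => g i = one ∧ g j = negOne) = 0 := by
  rw [← T.prob_false (X := Fin n → Sgn)]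
  exact T.prob_congr fun g hg =>
    iff_false_intro fun ⟨hi, hj⟩ => one_ne_negOne ((hs g hg i j hij hi).symm.trans hj)

lemma isMultimax_of_hasOrderedSupport (hT : IsCouplingFam μ T) (hs : HasOrderedSupport μ T) :
    IsMultimax μ T := by
  intro i j T' hT'
  wlog hij : (μ i).m one ≤ (μ j).m one generalizing i j
  · rw [prEq_comm, prEq_comm (T := T)]
    exact this j i (le_of_not_ge hij)
  rw [hT'.prEq_eq, hT.prEq_eq, prob_eq_one_and_eq_negOne_of_hasOrderedSupport hs hij]
  linarith [T'.prob_nonneg (φ := fun g => g i = one ∧ g j = negOne)]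

lemma hasOrderedSupport_of_isMultimax (hT : IsCouplingFam μ T) (hmax : IsMultimax μ T)
    (hT₀ : IsCouplingFam μ T₀) (hs₀ : HasOrderedSupport μ T₀) :
    HasOrderedSupport μ T := by
  intro f hf i j hij hfi
  by_contra hfj
  have hle := hmax i j T₀ hT₀
  rw [hT₀.prEq_eq, hT.prEq_eq, prob_eq_one_and_eq_negOne_of_hasOrderedSupport hs₀ hij] at hle
  have hmass := T.apply_le_prob (φ := fun g => g i = one ∧ g j = negOne)
    ⟨hfi, ne_one_iff_eq_negOne.1 hfj⟩
  exact hf (le_antisymm (by linarith) (T.nonneg f))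

end Ordered

noncomputable def threshold {ι : Type} (p : ι → ℝ) (t : ℝ) : ι → Sgn :=
  fun i => if t < p i then one else negOne

lemma isOrderedBy_threshold {ι : Type} (p : ι → ℝ) (t : ℝ) :
    IsOrderedBy p (threshold p t) := by
  intro i j hij hi
  have ht : t < p i := by
    by_contra h
    simp [threshold, h, one_ne_negOne.symm] at hi
  simp [threshold, ht.trans_le hij]

lemma measurable_threshold {ι : Type} (p : ι → ℝ) : Measurable (threshold p) :=
  measurable_pi_lambda _ fun _ => Measurable.ite measurableSet_Iio measurable_const measurable_const

section Quantile

variable {n : ℕ}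

noncomputable def quantileCoupling (μ : Fin n → FDist Sgn) : FDist (Fin n → Sgn) where
  m f := (volume.restrict (Set.Ico (0 : ℝ) 1)).real (threshold (fun i => (μ i).m one) ⁻¹' {f})
  nonneg _ := measureReal_nonneg
  total := by
    rw [sum_measureReal_preimage_singleton _
      fun _ _ => measurable_threshold _ (measurableSet_singleton _)]
    simp

variable {μ : Fin n → FDist Sgn}

lemma quantileCoupling_prob (φ : (Fin n → Sgn) → Prop) [DecidablePred φ] :
    (quantileCoupling μ).prob φ = (volume.restrict (Set.Ico (0 : ℝ) 1)).real
      (threshold (fun i => (μ i).m one) ⁻¹' {f | φ f}) := by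
  rw [FDist.prob, ← sum_filter, quantileCoupling, sum_measureReal_preimage_singleton _
    fun _ _ => measurable_threshold _ (measurableSet_singleton _), coe_filter]
  simp only [mem_univ, true_and]

lemma isCouplingFam_quantileCoupling : IsCouplingFam μ (quantileCoupling μ) := by
  refine isCouplingFam_of_prob_eq_one fun i => ?_
  have h : threshold (fun i => (μ i).m one) ⁻¹' {f | f i = one} = Set.Iio ((μ i).m one) := by
    ext t
    by_cases ht : t < (μ i).m one <;> simp [threshold, ht, one_ne_negOne.symm]
  rw [quantileCoupling_prob, h, measureReal_restrict_apply measurableSet_Iio,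
    Set.inter_comm, Set.Ico_inter_Iio, min_eq_right (μ i).apply_one_le_one,
    Real.volume_real_Ico_of_le ((μ i).nonneg one), sub_zero]

lemma hasOrderedSupport_quantileCoupling : HasOrderedSupport μ (quantileCoupling μ) := by
  intro f hf
  obtain ⟨t, ht⟩ : (threshold (fun i => (μ i).m one) ⁻¹' {f}).Nonempty := by
    by_contra h
    exact hf (by simp [quantileCoupling, Set.not_nonempty_iff_eq_empty.1 h])
  rw [← ht]
  exact isOrderedBy_threshold _ t

end Quantile

/-- For any finite family of probability distributions on {−1,1} there is one and only
one multimaximal coupling. -/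
theorem stmt5 (n : ℕ) (μ : Fin n → FDist Sgn) :
    ∃! T : FDist (Fin n → Sgn), IsCouplingFam μ T ∧ IsMultimax μ T := by
  have hT₀ := isCouplingFam_quantileCoupling (μ := μ)
  have hs₀ := hasOrderedSupport_quantileCoupling (μ := μ)
  refine ⟨quantileCoupling μ, ⟨hT₀, isMultimax_of_hasOrderedSupport hT₀ hs₀⟩, ?_⟩
  rintro T ⟨hT, hmax⟩
  exact eq_of_hasOrderedSupport hT (hasOrderedSupport_of_isMultimax hT hmax hT₀ hs₀) hT₀ hs₀
end

section
/- Let R be a simply consistently connected system of random variables and R‡ its consistification. Then the noncontextual fraction α_max of R equals the noncontextual fraction of R‡ (hence their contextual fractions 1 − α_max are equal; in particular, R has an identically connected coupling if and only if R‡ does). -/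
section Consistification

variable {Q C : Type} [Fintype Q] [Fintype C] [DecidableEq Q] [DecidableEq C]

/-- The is-measured-in relation of the consistified system: the new contents are the
measured content–context pairs (q,c) of the old system; the new contexts are the old
contexts (inl c) and the old contents (inr q); the new content (q,c) is measured
exactly in the new contexts inl c and inr q. -/
def consPre (pre : Q → C → Bool) : Glob pre → C ⊕ Q → Bool
  | x, Sum.inl c => decide (x.1.2 = c)
  | x, Sum.inr q => decide (x.1.1 = q)

/-- The old content of a new content measured in a new context inl c, seen as a
content of the old context c. -/
def oldOfCtx (pre : Q → C → Bool) (c : C)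
    (x : {x : Glob pre // consPre pre x (Sum.inl c)}) : {q : Q // pre q c} :=
  ⟨x.1.1.1, by
    have hx := x.2
    simp only [consPre, decide_eq_true_eq] at hx
    have h := x.1.2
    rw [hx] at h
    exact h⟩

/-- The relabeling of a bunch of the old context c as a bunch of the new context
inl c. -/
def relabel (pre : Q → C → Bool) (c : C) (f : {q : Q // pre q c} → Sgn) :
    {x : Glob pre // consPre pre x (Sum.inl c)} → Sgn :=
  fun x => f (oldOfCtx pre c x)

/-- The old context of a new content measured in a new context inr q, with proof that
it measures q. -/
def preOfConn (pre : Q → C → Bool) (q : Q)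
    (x : {x : Glob pre // consPre pre x (Sum.inr q)}) : pre q x.1.1.2 := by
  have hx := x.2
  simp only [consPre, decide_eq_true_eq] at hx
  have h := x.1.2
  rw [hx] at h
  exact h

/-- The element of the connection-bunch domain corresponding to context c. -/
def connElem (pre : Q → C → Bool) (q : Q) (c : C) (h : pre q c) :
    {x : Glob pre // consPre pre x (Sum.inr q)} :=
  ⟨⟨(q, c), h⟩, by simp [consPre]⟩

end Consistification
section PushAux
variable {X Y : Type} [Fintype X] [DecidableEq Y]

lemma push_nonneg {p : X → ℝ} (hp : ∀ x, 0 ≤ p x) (f : X → Y) (y : Y) :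
    0 ≤ push p f y :=
  Finset.sum_nonneg fun x _ => by split; exacts [hp x, le_rfl]

lemma push_total [Fintype Y] (p : X → ℝ) (f : X → Y) : ∑ y, push p f y = ∑ x, p x := by
  unfold push
  rw [Finset.sum_comm]
  simp

lemma push_mono {p q : X → ℝ} (h : ∀ x, p x ≤ q x) (f : X → Y) (y : Y) :
    push p f y ≤ push q f y :=
  Finset.sum_le_sum fun x _ => by split; exacts [h x, le_rfl]

lemma sum_ite_push [Fintype Y] (p : X → ℝ) (f : X → Y) (P : Y → Prop) [DecidablePred P] :
    (∑ y, if P y then push p f y else 0) = ∑ x, if P (f x) then p x else 0 := by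
  unfold push
  have h1 : ∀ y, (if P y then (∑ x, if f x = y then p x else 0) else 0)
      = ∑ x, if P y then (if f x = y then p x else 0) else 0 := by
    intro y; split <;> simp
  simp only [h1]
  rw [Finset.sum_comm]
  refine Finset.sum_congr rfl fun x _ => ?_
  rw [Finset.sum_eq_single (f x)]
  · simp
  · intro b _ hb
    have : ¬ f x = b := fun h => hb h.symm
    simp [this]
  · simp

lemma push_comp {Z : Type} [Fintype Y] [DecidableEq Z] (p : X → ℝ) (f : X → Y) (g : Y → Z) :
    push (push p f) g = push p (g ∘ f) := by
  funext z
  exact sum_ite_push p f (fun y => g y = z)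

lemma push_equiv [Fintype Y] [DecidableEq X] (p : X → ℝ) (e : X ≃ Y) (y : Y) :
    push p e y = p (e.symm y) := by
  unfold push
  rw [Finset.sum_eq_single (e.symm y)]
  · simp
  · intro b _ hb
    have : ¬ e b = y := fun h => hb (by simp [← h])
    simp [this]
  · simp

lemma sum_ite_eq_zero_pointwise {p : X → ℝ} (hp : ∀ x, 0 ≤ p x)
    {P : X → Prop} [DecidablePred P] (h : (∑ x, if P x then p x else 0) = 0) :
    ∀ x, P x → p x = 0 := by
  intro x hx
  have h2 := (Finset.sum_eq_zero_iff_of_nonneg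
    (fun i _ => by split; exacts [hp i, le_rfl])).mp h x (Finset.mem_univ x)
  simpa [hx] using h2

end PushAux

section Maps
variable {Q C : Type} [Fintype Q] [Fintype C] [DecidableEq Q] [DecidableEq C]

def fwdF (pre : Q → C → Bool) (f : Glob pre → Sgn) : Glob (consPre pre) → Sgn :=
  fun X => f X.1.1

def bwdF (pre : Q → C → Bool) (F : Glob (consPre pre) → Sgn) : Glob pre → Sgn :=
  fun x => F ⟨(x, Sum.inl x.1.2), by simp [consPre]⟩

lemma ctx_eq (pre : Q → C → Bool) (c : C) (x : {x : Glob pre // consPre pre x (Sum.inl c)}) :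
    x.1.1.2 = c := by
  have := x.2; simpa [consPre] using this

lemma cnt_eq (pre : Q → C → Bool) (q : Q) (x : {x : Glob pre // consPre pre x (Sum.inr q)}) :
    x.1.1.1 = q := by
  have := x.2; simpa [consPre] using this

def eCtx (pre : Q → C → Bool) (c : C) :
    {q : Q // pre q c} ≃ {x : Glob pre // consPre pre x (Sum.inl c)} where
  toFun q := ⟨⟨(q.1, c), q.2⟩, by simp [consPre]⟩
  invFun := oldOfCtx pre c
  left_inv q := Subtype.ext rfl
  right_inv x := by
    apply Subtype.ext; apply Subtype.ext
    exact Prod.ext rfl (ctx_eq pre c x).symm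

def eFun (pre : Q → C → Bool) (c : C) :
    ({x : Glob pre // consPre pre x (Sum.inl c)} → Sgn) ≃ ({q : Q // pre q c} → Sgn) where
  toFun F := fun q => F (eCtx pre c q)
  invFun := relabel pre c
  left_inv F := by
    funext x
    exact congrArg F ((eCtx pre c).right_inv x)
  right_inv g := by
    funext q
    exact congrArg g ((eCtx pre c).left_inv q)

lemma restr_fwd (pre : Q → C → Bool) (c : C) (f : Glob pre → Sgn) :
    restr (consPre pre) (Sum.inl c) (fwdF pre f) = relabel pre c (restr pre c f) := by
  funext x
  show f x.1 = f ((eCtx pre c) (oldOfCtx pre c x)).1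
  exact congrArg f (congrArg Subtype.val ((eCtx pre c).right_inv x)).symm

lemma restr_bwd (pre : Q → C → Bool) (c : C) (F : Glob (consPre pre) → Sgn) :
    restr pre c (bwdF pre F) = (eFun pre c) (restr (consPre pre) (Sum.inl c) F) := by
  funext q
  rfl

end Maps
section Transfer
variable {Q C : Type} [Fintype Q] [Fintype C] [DecidableEq Q] [DecidableEq C]
variable (pre : Q → C → Bool) (R : (c : C) → FDist ({q : Q // pre q c} → Sgn))
variable (R' : (d : C ⊕ Q) → FDist ({x : Glob pre // consPre pre x d} → Sgn))

lemma transfer_fwd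
    (hC : ∀ c : C, (R' (Sum.inl c)).m = push (R c).m (relabel pre c))
    (hdiag : ∀ (q : Q) (g : {x : Glob pre // consPre pre x (Sum.inr q)} → Sgn),
      (¬ ∀ x y, g x = g y) → (R' (Sum.inr q)).m g = 0)
    (hmarg : ∀ (q : Q) (x : {x : Glob pre // consPre pre x (Sum.inr q)}),
      push (R' (Sum.inr q)).m (fun g => g x) = marg pre R x.1.1.2 q (preOfConn pre q x))
    (s : (Glob pre → Sgn) → ℝ) (a : ℝ) (ha1 : a ≤ 1)
    (hs : IsAlphaCoupling pre R s a) (hid : IdConnSub pre s) :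
    IsAlphaCoupling (consPre pre) R' (push s (fwdF pre)) a ∧
      IdConnSub (consPre pre) (push s (fwdF pre)) := by
  obtain ⟨hnn, htot, hmar⟩ := hs
  have hnull : ∀ (f : Glob pre → Sgn) (q : Q) (c c' : C) (h : pre q c) (h' : pre q c'),
      f ⟨(q, c), h⟩ ≠ f ⟨(q, c'), h'⟩ → s f = 0 :=
    fun f q c c' h h' hne => sum_ite_eq_zero_pointwise hnn (hid q c c' h h') f hne
  refine ⟨⟨fun F => push_nonneg hnn _ F, (push_total s (fwdF pre)).trans htot, ?_⟩, ?_⟩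
  · intro d g
    rw [push_comp]
    match d with
    | Sum.inl c =>
      have e : restr (consPre pre) (Sum.inl c) ∘ fwdF pre = relabel pre c ∘ restr pre c :=
        funext fun f => restr_fwd pre c f
      rw [e, ← push_comp, hC c]
      exact push_mono (hmar c) (relabel pre c) g
    | Sum.inr q =>
      by_cases hcon : ∀ x y, g x = g y
      · by_cases hne : Nonempty {x : Glob pre // consPre pre x (Sum.inr q)}
        · obtain ⟨x0⟩ := hne
          have hq := cnt_eq pre q x0
          have step1 : push s (restr (consPre pre) (Sum.inr q) ∘ fwdF pre) g
              ≤ push s (fun f => f x0.1) (g x0) := by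
            apply Finset.sum_le_sum
            intro f _
            by_cases hf : (restr (consPre pre) (Sum.inr q) ∘ fwdF pre) f = g
            · have hf' : restr (consPre pre) (Sum.inr q) (fwdF pre f) = g := hf
              have hfx : f x0.1 = g x0 := congrFun hf x0
              simp [hf', hfx]
            · simp only [hf, if_false]
              split
              · exact hnn f
              · exact le_rfl
          have step2 : push s (fun f => f x0.1) (g x0)
              ≤ marg pre R x0.1.1.2 x0.1.1.1 x0.1.2 (g x0) := by
            have e : (fun f : Glob pre → Sgn => f x0.1)
                = (fun g' : {q' : Q // pre q' x0.1.1.2} → Sgn => g' ⟨x0.1.1.1, x0.1.2⟩)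
                  ∘ restr pre x0.1.1.2 := rfl
            rw [e, ← push_comp]
            exact push_mono (hmar x0.1.1.2) _ (g x0)
          have hsub : (⟨x0.1.1.1, x0.1.2⟩ : {q' : Q // pre q' x0.1.1.2})
              = ⟨q, preOfConn pre q x0⟩ := Subtype.ext hq
          have step4 : marg pre R x0.1.1.2 x0.1.1.1 x0.1.2
              = marg pre R x0.1.1.2 q (preOfConn pre q x0) :=
            congrArg (push (R x0.1.1.2).m) (funext fun f => congrArg f hsub)
          have step3 : (R' (Sum.inr q)).m g
              = marg pre R x0.1.1.2 q (preOfConn pre q x0) (g x0) := by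
            rw [← hmarg q x0]
            show (R' (Sum.inr q)).m g = ∑ G, if G x0 = g x0 then (R' (Sum.inr q)).m G else 0
            rw [Finset.sum_eq_single g]
            · simp
            · intro G _ hG
              by_cases hGc : ∀ x y, G x = G y
              · split
                · exfalso
                  apply hG
                  funext x
                  calc G x = G x0 := hGc x x0
                    _ = g x0 := by assumption
                    _ = g x := hcon x0 x
                · rfl
              · simp [hdiag q G hGc]
            · simp
          rw [step3, ← step4]
          exact step1.trans step2
        · have hie : IsEmpty {x : Glob pre // consPre pre x (Sum.inr q)} :=
            not_nonempty_iff.mp hne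
          have hall : ∀ f, (restr (consPre pre) (Sum.inr q) ∘ fwdF pre) f = g :=
            fun f => funext fun x => (hie.false x).elim
          have hL : push s (restr (consPre pre) (Sum.inr q) ∘ fwdF pre) g = a := by
            show (∑ f, if (restr (consPre pre) (Sum.inr q) ∘ fwdF pre) f = g then s f else 0) = a
            simp only [hall, if_true]
            exact htot
          have huniq : ∀ G : {x : Glob pre // consPre pre x (Sum.inr q)} → Sgn, G = g :=
            fun G => funext fun x => (hie.false x).elim
          have hR : (R' (Sum.inr q)).m g = 1 := by
            have ht := (R' (Sum.inr q)).total
            rw [Finset.sum_eq_single g (fun b _ hb => absurd (huniq b) hb) (fun hg => absurd (Finset.mem_univ g) hg)] at ht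
            exact ht
          rw [hL, hR]
          exact ha1
      · have hz : push s (restr (consPre pre) (Sum.inr q) ∘ fwdF pre) g = 0 := by
          apply Finset.sum_eq_zero
          intro f _
          split
          · next hfg =>
            push_neg at hcon
            obtain ⟨x, y, hxy⟩ := hcon
            apply hnull f q x.1.1.2 y.1.1.2 (preOfConn pre q x) (preOfConn pre q y)
            have ex : (⟨(q, x.1.1.2), preOfConn pre q x⟩ : Glob pre) = x.1 :=
              Subtype.ext (Prod.ext (cnt_eq pre q x).symm rfl)
            have ey : (⟨(q, y.1.1.2), preOfConn pre q y⟩ : Glob pre) = y.1 :=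
              Subtype.ext (Prod.ext (cnt_eq pre q y).symm rfl)
            rw [ex, ey]
            have hgx : f x.1 = g x := congrFun hfg x
            have hgy : f y.1 = g y := congrFun hfg y
            rw [hgx, hgy]
            exact hxy
          · rfl
        rw [hz]
        exact (R' (Sum.inr q)).nonneg g
  · intro x d d' h h'
    rw [sum_ite_push s (fwdF pre) (fun F => F ⟨(x, d), h⟩ ≠ F ⟨(x, d'), h'⟩)]
    apply Finset.sum_eq_zero
    intro f _
    simp [fwdF]

end Transfer
section Transfer2
variable {Q C : Type} [Fintype Q] [Fintype C] [DecidableEq Q] [DecidableEq C]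
variable (pre : Q → C → Bool) (R : (c : C) → FDist ({q : Q // pre q c} → Sgn))
variable (R' : (d : C ⊕ Q) → FDist ({x : Glob pre // consPre pre x d} → Sgn))

lemma transfer_bwd
    (hC : ∀ c : C, (R' (Sum.inl c)).m = push (R c).m (relabel pre c))
    (hdiag : ∀ (q : Q) (g : {x : Glob pre // consPre pre x (Sum.inr q)} → Sgn),
      (¬ ∀ x y, g x = g y) → (R' (Sum.inr q)).m g = 0)
    (s' : (Glob (consPre pre) → Sgn) → ℝ) (a : ℝ)
    (hs' : IsAlphaCoupling (consPre pre) R' s' a) (hid' : IdConnSub (consPre pre) s') :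
    IsAlphaCoupling pre R (push s' (bwdF pre)) a ∧ IdConnSub pre (push s' (bwdF pre)) := by
  obtain ⟨hnn, htot, hmar⟩ := hs'
  have hnull1 : ∀ (F : Glob (consPre pre) → Sgn) (x : Glob pre) (d d' : C ⊕ Q)
      (h : consPre pre x d) (h' : consPre pre x d'),
      F ⟨(x, d), h⟩ ≠ F ⟨(x, d'), h'⟩ → s' F = 0 :=
    fun F x d d' h h' hne => sum_ite_eq_zero_pointwise hnn (hid' x d d' h h') F hne
  have hnull2 : ∀ (F : Glob (consPre pre) → Sgn) (q : Q)
      (x y : {x : Glob pre // consPre pre x (Sum.inr q)}),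
      restr (consPre pre) (Sum.inr q) F x ≠ restr (consPre pre) (Sum.inr q) F y → s' F = 0 := by
    intro F q x y hne
    have hcon : ¬ ∀ x y, restr (consPre pre) (Sum.inr q) F x
        = restr (consPre pre) (Sum.inr q) F y := fun h => hne (h x y)
    have h0 : push s' (restr (consPre pre) (Sum.inr q)) (restr (consPre pre) (Sum.inr q) F)
        ≤ 0 := by
      rw [← hdiag q _ hcon]
      exact hmar (Sum.inr q) _
    have h0' : (∑ G, if restr (consPre pre) (Sum.inr q) G
        = restr (consPre pre) (Sum.inr q) F then s' G else 0) = 0 :=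
      le_antisymm h0 (push_nonneg hnn _ _)
    exact sum_ite_eq_zero_pointwise hnn h0' F rfl
  refine ⟨⟨fun f => push_nonneg hnn _ f, (push_total s' (bwdF pre)).trans htot, ?_⟩, ?_⟩
  · intro c g
    rw [push_comp]
    have e : restr pre c ∘ bwdF pre = ⇑(eFun pre c) ∘ restr (consPre pre) (Sum.inl c) :=
      funext fun F => restr_bwd pre c F
    rw [e, ← push_comp, push_equiv]
    calc push s' (restr (consPre pre) (Sum.inl c)) ((eFun pre c).symm g)
        ≤ (R' (Sum.inl c)).m ((eFun pre c).symm g) := hmar _ _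
      _ = push (R c).m (relabel pre c) ((eFun pre c).symm g) := by rw [hC c]
      _ = (R c).m g := by
          have hrel : relabel pre c = ⇑(eFun pre c).symm := rfl
          rw [hrel, push_equiv]
          simp
  · intro q c c' h h'
    rw [sum_ite_push s' (bwdF pre) (fun f => f ⟨(q, c), h⟩ ≠ f ⟨(q, c'), h'⟩)]
    apply Finset.sum_eq_zero
    intro F _
    split
    · next hne =>
      by_contra hF0
      have hq : consPre pre (⟨(q, c), h⟩ : Glob pre) (Sum.inr q) = true := by simp [consPre]
      have hq' : consPre pre (⟨(q, c'), h'⟩ : Glob pre) (Sum.inr q) = true := by simp [consPre]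
      have hc : consPre pre (⟨(q, c), h⟩ : Glob pre) (Sum.inl c) = true := by simp [consPre]
      have hc' : consPre pre (⟨(q, c'), h'⟩ : Glob pre) (Sum.inl c') = true := by simp [consPre]
      have e1 : F ⟨(⟨(q, c), h⟩, Sum.inl c), hc⟩ = F ⟨(⟨(q, c), h⟩, Sum.inr q), hq⟩ := by
        by_contra hne1
        exact hF0 (hnull1 F _ _ _ _ _ hne1)
      have e2 : F ⟨(⟨(q, c), h⟩, Sum.inr q), hq⟩ = F ⟨(⟨(q, c'), h'⟩, Sum.inr q), hq'⟩ := by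
        by_contra hne2
        exact hF0 (hnull2 F q ⟨⟨(q, c), h⟩, hq⟩ ⟨⟨(q, c'), h'⟩, hq'⟩ hne2)
      have e3 : F ⟨(⟨(q, c'), h'⟩, Sum.inr q), hq'⟩ = F ⟨(⟨(q, c'), h'⟩, Sum.inl c'), hc'⟩ := by
        by_contra hne3
        exact hF0 (hnull1 F _ _ _ _ _ hne3)
      exact hne (e1.trans (e2.trans e3))
    · rfl

end Transfer2
section Generic
variable {Q C : Type} [Fintype Q] [Fintype C] [DecidableEq Q] [DecidableEq C]
variable (pre : Q → C → Bool) (R : (c : C) → FDist ({q : Q // pre q c} → Sgn))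

lemma split_sum_s11 (m : (Glob pre → Sgn) → ℝ) (q : Q) (c c' : C) (h : pre q c) (h' : pre q c') :
    (∑ f, if f ⟨(q, c), h⟩ = f ⟨(q, c'), h'⟩ then m f else 0)
      + (∑ f, if f ⟨(q, c), h⟩ ≠ f ⟨(q, c'), h'⟩ then m f else 0) = ∑ f, m f := by
  rw [← Finset.sum_add_distrib]
  refine Finset.sum_congr rfl fun f _ => ?_
  by_cases hf : f ⟨(q, c), h⟩ = f ⟨(q, c'), h'⟩ <;> simp [hf]

lemma coupling_iff_one :
    (∃ T : FDist (Glob pre → Sgn), IsCoupling pre R T ∧ IdConn pre T) ↔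
    (∃ s : (Glob pre → Sgn) → ℝ, IsAlphaCoupling pre R s 1 ∧ IdConnSub pre s) := by
  constructor
  · rintro ⟨T, hT, hid⟩
    refine ⟨T.m, ⟨T.nonneg, T.total, fun c g => le_of_eq (congrFun (hT c) g)⟩, ?_⟩
    intro q c c' h h'
    have := split_sum_s11 pre T.m q c c' h h'
    rw [T.total] at this
    have h1 := hid q c c' h h'
    unfold prAgree at h1
    linarith
  · rintro ⟨s, ⟨hnn, htot, hmar⟩, hid⟩
    have hcoup : ∀ c : C, push s (restr pre c) = (R c).m := by
      intro c
      funext g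
      have hle : ∀ g' ∈ (Finset.univ : Finset ({q : Q // pre q c} → Sgn)),
          push s (restr pre c) g' ≤ (R c).m g' := fun g' _ => hmar c g'
      have hsum : ∑ g', push s (restr pre c) g' = ∑ g', (R c).m g' := by
        rw [push_total, htot, (R c).total]
      exact (Finset.sum_eq_sum_iff_of_le hle).mp hsum g (Finset.mem_univ g)
    refine ⟨⟨s, hnn, htot⟩, hcoup, ?_⟩
    intro q c c' h h'
    have := split_sum_s11 pre s q c c' h h'
    rw [htot] at this
    have h2 := hid q c c' h h'
    unfold prAgree
    simp only at this ⊢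
    linarith

lemma mass_le_one (c0 : C) (s : (Glob pre → Sgn) → ℝ) (a : ℝ)
    (hs : IsAlphaCoupling pre R s a) : a ≤ 1 := by
  obtain ⟨hnn, htot, hmar⟩ := hs
  calc a = ∑ f, s f := htot.symm
    _ = ∑ g, push s (restr pre c0) g := (push_total s (restr pre c0)).symm
    _ ≤ ∑ g, (R c0).m g := Finset.sum_le_sum fun g _ => hmar c0 g
    _ = 1 := (R c0).total

lemma no_greatest (hC : IsEmpty C) (α : ℝ)
    (hα : IsGreatest {a : ℝ | ∃ s : (Glob pre → Sgn) → ℝ,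
        IsAlphaCoupling pre R s a ∧ IdConnSub pre s} α) : False := by
  obtain ⟨s, ⟨hnn, htot, _⟩, _⟩ := hα.1
  have hα0 : 0 ≤ α := htot ▸ Finset.sum_nonneg fun f _ => hnn f
  have hmem : α + 1 ∈ {a : ℝ | ∃ s : (Glob pre → Sgn) → ℝ,
      IsAlphaCoupling pre R s a ∧ IdConnSub pre s} := by
    refine ⟨fun f => if f = (fun _ => one) then α + 1 else 0, ⟨?_, ?_, ?_⟩, ?_⟩
    · intro f
      simp only
      split
      · linarith
      · exact le_rfl
    · simp only
      rw [Finset.sum_ite_eq' Finset.univ (fun _ => one) (fun _ => α + 1)]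
      exact if_pos (Finset.mem_univ _)
    · intro c; exact hC.elim c
    · intro q c; exact hC.elim c
  have := hα.2 hmem
  linarith
end Generic
/-- For a simply consistently connected system R, the noncontextual fraction of R
(the greatest total mass of an identically connected incomplete coupling) equals that
of its consistification R‡; in particular R has an identically connected coupling iff
R‡ does. The consistification R‡ has the measured pairs of R as contents and C ⊔ Q as
contexts; the bunch of a new context inl c is the bunch of c with relabeled
coordinates, and the bunch of a new context inr q is the diagonal distribution
concentrated on constant functions whose coordinate marginals are the common marginal
of the connection of q (its unique multimaximal coupling). -/
theorem stmt11 {Q C : Type} [Fintype Q] [Fintype C] [DecidableEq Q] [DecidableEq C]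
    (pre : Q → C → Bool) (R : (c : C) → FDist ({q : Q // pre q c} → Sgn))
    (hsimple : SimplyCC pre R)
    (R' : (d : C ⊕ Q) → FDist ({x : Glob pre // consPre pre x d} → Sgn))
    (hC : ∀ c : C, (R' (Sum.inl c)).m = push (R c).m (relabel pre c))
    (hdiag : ∀ (q : Q) (g : {x : Glob pre // consPre pre x (Sum.inr q)} → Sgn),
      (¬ ∀ x y, g x = g y) → (R' (Sum.inr q)).m g = 0)
    (hmarg : ∀ (q : Q) (x : {x : Glob pre // consPre pre x (Sum.inr q)}),
      push (R' (Sum.inr q)).m (fun g => g x) = marg pre R x.1.1.2 q (preOfConn pre q x))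
    (α α' : ℝ)
    (hα : IsGreatest {a : ℝ | ∃ s : (Glob pre → Sgn) → ℝ,
        IsAlphaCoupling pre R s a ∧ IdConnSub pre s} α)
    (hα' : IsGreatest {a : ℝ | ∃ s : (Glob (consPre pre) → Sgn) → ℝ,
        IsAlphaCoupling (consPre pre) R' s a ∧ IdConnSub (consPre pre) s} α') :
    α = α' ∧
    ((∃ T : FDist (Glob pre → Sgn), IsCoupling pre R T ∧ IdConn pre T) ↔
      (∃ T' : FDist (Glob (consPre pre) → Sgn),
        IsCoupling (consPre pre) R' T' ∧ IdConn (consPre pre) T')) := by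

  by_cases hc : Nonempty C
  · obtain ⟨c0⟩ := hc
    have fwdMem : ∀ a : ℝ, (∃ s : (Glob pre → Sgn) → ℝ,
        IsAlphaCoupling pre R s a ∧ IdConnSub pre s) →
        (∃ s' : (Glob (consPre pre) → Sgn) → ℝ,
          IsAlphaCoupling (consPre pre) R' s' a ∧ IdConnSub (consPre pre) s') := by
      rintro a ⟨s, hs, hid⟩
      exact ⟨push s (fwdF pre), transfer_fwd pre R R' hC hdiag hmarg s a
        (mass_le_one pre R c0 s a hs) hs hid⟩
    have bwdMem : ∀ a : ℝ, (∃ s' : (Glob (consPre pre) → Sgn) → ℝ,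
        IsAlphaCoupling (consPre pre) R' s' a ∧ IdConnSub (consPre pre) s') →
        (∃ s : (Glob pre → Sgn) → ℝ,
          IsAlphaCoupling pre R s a ∧ IdConnSub pre s) := by
      rintro a ⟨s', hs', hid'⟩
      exact ⟨push s' (bwdF pre), transfer_bwd pre R R' hC hdiag s' a hs' hid'⟩
    refine ⟨le_antisymm (hα'.2 (fwdMem α hα.1)) (hα.2 (bwdMem α' hα'.1)), ?_⟩
    rw [coupling_iff_one, coupling_iff_one]
    exact ⟨fwdMem 1, bwdMem 1⟩
  · exact (no_greatest pre R (not_nonempty_iff.mp hc) α hα).elim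
end

section
/- Consider the cyclic rank-3 system with contents q₁, q₂, q₃ and contexts c¹ (measuring q₁, q₂), c² (measuring q₂, q₃), c³ (measuring q₃, q₁), whose bunches are: in c¹ the uniform distribution on {(1,1), (−1,−1)}, in c² the uniform distribution on {(1,1), (−1,−1)}, and in c³ the uniform distribution on {(1,−1), (−1,1)}. This system is simply consistently connected, and its noncontextual fraction is α_max = 0: every identically connected α-coupling has total mass α = 0 (the system is strongly contextual). -/
/-- The is-measured-in relation of the cyclic rank-3 system: context c measures
contents c and c + 1. -/
def pre3 : Fin 3 → Fin 3 → Bool := fun q c => decide (q = c ∨ q = c + 1)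

open Finset

section Couplings

variable {Q C : Type} [Fintype Q] [Fintype C] [DecidableEq Q] [DecidableEq C]
  {pre : Q → C → Bool} {R : (c : C) → FDist ({q : Q // pre q c} → Sgn)}
  {s : (Glob pre → Sgn) → ℝ} {α : ℝ}

def IsIdConnected (f : Glob pre → Sgn) : Prop :=
  ∀ (q : Q) (c c' : C) (h : pre q c) (h' : pre q c'), f ⟨(q, c), h⟩ = f ⟨(q, c'), h'⟩

lemma IsAlphaCoupling.le_bunch (hs : IsAlphaCoupling pre R s α) (c : C) (f : Glob pre → Sgn) :
    s f ≤ (R c).m (restr pre c f) :=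
  calc s f = if restr pre c f = restr pre c f then s f else 0 := (if_pos rfl).symm
    _ ≤ push s (restr pre c) (restr pre c f) :=
      single_le_sum (f := fun f' => if restr pre c f' = restr pre c f then s f' else 0)
        (fun f' _ => by split <;> simp [hs.1 f']) (mem_univ f)
    _ ≤ (R c).m (restr pre c f) := hs.2.2 c _

lemma IdConnSub.isIdConnected_of_pos (hid : IdConnSub pre s) (hs : ∀ f, 0 ≤ s f)
    {f : Glob pre → Sgn} (hf : 0 < s f) : IsIdConnected f := by
  intro q c c' h h'
  by_contra hne
  have hterm := (sum_eq_zero_iff_of_nonneg fun f' _ => by split <;> simp [hs f']).mp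
    (hid q c c' h h') f (mem_univ f)
  rw [if_pos hne] at hterm
  exact hf.ne' hterm

lemma IsAlphaCoupling.eq_zero_of_forall_isIdConnected
    (hno : ∀ f : Glob pre → Sgn, IsIdConnected f → ∃ c, (R c).m (restr pre c f) = 0)
    (hs : IsAlphaCoupling pre R s α) (hid : IdConnSub pre s) : α = 0 := by
  rw [← hs.2.1]
  refine sum_eq_zero fun f _ => le_antisymm ?_ (hs.1 f)
  by_contra! hpos
  obtain ⟨c, hc⟩ := hno f (hid.isIdConnected_of_pos hs.1 hpos)
  exact (hs.le_bunch c f).not_gt (hc ▸ hpos)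

end Couplings

lemma push_ite_half {X Y : Type} [Fintype X] [DecidableEq Y] (P : X → Prop) [DecidablePred P]
    (g : X → Y) (y : Y) :
    push (fun x => if P x then (1/2 : ℝ) else 0) g y = #{x | g x = y ∧ P x} / 2 := by
  simp only [push, ← ite_and, sum_ite, sum_const, nsmul_eq_mul]
  ring

noncomputable def prBox (c : Fin 3) (f : {q : Fin 3 // pre3 q c} → Sgn) : ℝ :=
  if (∀ x y, f x = f y) ↔ c ≠ 2 then 1/2 else 0

lemma simplyCC_of_prBox {R : (c : Fin 3) → FDist ({q : Fin 3 // pre3 q c} → Sgn)}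
    (hR : ∀ c, (R c).m = prBox c) : SimplyCC pre3 R := by
  have card_eq_one : ∀ (c q : Fin 3) (h : pre3 q c) (v : Sgn),
      #{f : {q : Fin 3 // pre3 q c} → Sgn | f ⟨q, h⟩ = v ∧ ((∀ x y, f x = f y) ↔ c ≠ 2)} = 1 := by
    decide
  have marg_eq_half : ∀ c q h, marg pre3 R c q h = fun _ => 1/2 := by
    intro c q h
    funext v
    rw [marg, hR]
    unfold prBox
    rw [push_ite_half, card_eq_one]
    norm_num
  intro q c c' h h'
  rw [marg_eq_half, marg_eq_half]

lemma prBox_exists_eq_zero_of_isIdConnected {f : Glob pre3 → Sgn} (hf : IsIdConnected f) :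
    ∃ c, prBox c (restr pre3 c f) = 0 := by
  by_contra! hsupp
  have hconst : ∀ c, (∀ x y, restr pre3 c f x = restr pre3 c f y) ↔ c ≠ 2 := fun c => by
    by_contra hc
    exact hsupp c (if_neg hc)
  have hcycle : f ⟨(2, 2), by decide⟩ = f ⟨(0, 2), by decide⟩ :=
    calc f ⟨(2, 2), _⟩ = f ⟨(2, 1), by decide⟩ := hf 2 2 1 _ _
      _ = f ⟨(1, 1), by decide⟩ := ((hconst 1).2 (by decide) ⟨1, by decide⟩ ⟨2, by decide⟩).symm
      _ = f ⟨(1, 0), by decide⟩ := hf 1 1 0 _ _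
      _ = f ⟨(0, 0), by decide⟩ := ((hconst 0).2 (by decide) ⟨0, by decide⟩ ⟨1, by decide⟩).symm
      _ = f ⟨(0, 2), _⟩ := hf 0 0 2 _ _
  have hval : ∀ x, restr pre3 2 f x = f ⟨(2, 2), by decide⟩ := by
    rintro ⟨q, hq⟩
    fin_cases q
    · exact hcycle.symm
    · exact absurd hq (by decide)
    · rfl
  exact (hconst 2).1 (fun x y => by rw [hval x, hval y]) rfl

/-- The cyclic rank-3 system whose bunches are uniform on equal pairs in contexts 0
and 1 and uniform on unequal pairs in context 2 (a Popescu–Rohrlich-type box) is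
simply consistently connected, and every identically connected α-coupling of it has
total mass α = 0: its noncontextual fraction is 0 (the system is strongly
contextual). -/
theorem stmt14 (R : (c : Fin 3) → FDist ({q : Fin 3 // pre3 q c} → Sgn))
    (h0 : ∀ f : {q : Fin 3 // pre3 q 0} → Sgn,
      (R 0).m f = if ∀ x y, f x = f y then 1/2 else 0)
    (h1 : ∀ f : {q : Fin 3 // pre3 q 1} → Sgn,
      (R 1).m f = if ∀ x y, f x = f y then 1/2 else 0)
    (h2 : ∀ f : {q : Fin 3 // pre3 q 2} → Sgn,
      (R 2).m f = if ∀ x y, f x = f y then 0 else 1/2) :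
    SimplyCC pre3 R ∧
    ∀ (s : (Glob pre3 → Sgn) → ℝ) (α : ℝ),
      IsAlphaCoupling pre3 R s α → IdConnSub pre3 s → α = 0 := by
  have hR : ∀ c, (R c).m = prBox c
    | 0 => funext fun f => by simp [prBox, h0]
    | 1 => funext fun f => by simp [prBox, h1]
    | 2 => funext fun f => by simp only [prBox, h2, ne_eq, not_true_eq_false, iff_false, ite_not]
  refine ⟨simplyCC_of_prBox hR, fun s α hs hid => hs.eq_zero_of_forall_isIdConnected ?_ hid⟩
  intro f hf
  simpa only [hR] using prBox_exists_eq_zero_of_isIdConnected hf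
end
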